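/- For every a ∈ (0,1] and r ∈ (0,1) one has (1/(a²r))·log(1+ar) − 1/(a(1+ar)) ≥ r(1−r)/(2(1+r)). In particular, for fixed r the function a ↦ r(1−ar)/(2(1+ar)) is monotonically decreasing on [0,1], and (1/(a²r))log(1+ar) − 1/(a(1+ar)) ≥ r(1−ar)/(2(1+ar)) ≥ r(1−r)/(2(1+r)). -/

import Mathlib

open Set

lemma key_log (t : ℝ) (ht : 0 ≤ t) : t - t ^ 2 / 2 ≤ Real.log (1 + t) := by
  have hd : ∀ x : ℝ, 0 < 1 + x → HasDerivAt (fun x : ℝ => Real.log (1 + x) - x + x ^ 2 / 2)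
      (1 / (1 + x) - 1 + x) x := by
    intro x h1
    have h : HasDerivAt (fun x : ℝ => 1 + x) 1 x := by
      simpa using (hasDerivAt_id x).const_add 1
    have hl := (h.log h1.ne')
    have h2 := (hl.sub (hasDerivAt_id x)).add ((hasDerivAt_pow 2 x).div_const 2)
    simp at h2
    simp only [one_div]
    exact h2
  have hmono : MonotoneOn (fun x : ℝ => Real.log (1 + x) - x + x ^ 2 / 2) (Ici 0) := by
    apply monotoneOn_of_deriv_nonneg (convex_Ici 0)
    · apply ContinuousOn.add
      · apply ContinuousOn.sub
        · apply ContinuousOn.log (by fun_prop)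
          intro x hx
          simp only [mem_Ici] at hx; positivity
        · fun_prop
      · fun_prop
    · intro x hx
      simp only [interior_Ici, mem_Ioi] at hx
      exact ((hd x (by linarith)).differentiableAt).differentiableWithinAt
    · intro x hx
      simp only [interior_Ici, mem_Ioi] at hx
      have h1 : (0:ℝ) < 1 + x := by linarith
      rw [(hd x h1).deriv]
      have heq : 1 / (1 + x) - 1 + x = x ^ 2 / (1 + x) := by field_simp; ring
      rw [heq]; positivity
  have h0 : (fun x : ℝ => Real.log (1 + x) - x + x ^ 2 / 2) 0 ≤
      (fun x : ℝ => Real.log (1 + x) - x + x ^ 2 / 2) t :=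
    hmono (by simp) ht ht
  simp only [Real.log_one, add_zero] at h0
  nlinarith [h0]

theorem stmt8 (a r : ℝ) (ha0 : 0 < a) (ha1 : a ≤ 1) (hr0 : 0 < r) (hr1 : r < 1) :
    AntitoneOn (fun x : ℝ => r * (1 - x * r) / (2 * (1 + x * r))) (Icc 0 1) ∧
    r * (1 - a * r) / (2 * (1 + a * r)) ≤
      (1 / (a ^ 2 * r)) * Real.log (1 + a * r) - 1 / (a * (1 + a * r)) ∧
    r * (1 - r) / (2 * (1 + r)) ≤ r * (1 - a * r) / (2 * (1 + a * r)) ∧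
    r * (1 - r) / (2 * (1 + r)) ≤
      (1 / (a ^ 2 * r)) * Real.log (1 + a * r) - 1 / (a * (1 + a * r)) := by
  have hanti : AntitoneOn (fun x : ℝ => r * (1 - x * r) / (2 * (1 + x * r))) (Icc 0 1) := by
    intro x hx y hy hxy
    have hx1 : (0:ℝ) < 2 * (1 + x * r) := by nlinarith [hx.1]
    have hy1 : (0:ℝ) < 2 * (1 + y * r) := by nlinarith [hy.1]
    simp only
    rw [div_le_div_iff₀ hy1 hx1]
    nlinarith [hx.1, hy.1, mul_nonneg (mul_nonneg hr0.le hr0.le) (sub_nonneg.2 hxy)]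
  have har : 0 < a * r := mul_pos ha0 hr0
  have h1ar : (0:ℝ) < 1 + a * r := by linarith
  have hmain : r * (1 - a * r) / (2 * (1 + a * r)) ≤
      (1 / (a ^ 2 * r)) * Real.log (1 + a * r) - 1 / (a * (1 + a * r)) := by
    have hk := key_log (a * r) har.le
    have hid : (1 / (a ^ 2 * r)) * Real.log (1 + a * r) - 1 / (a * (1 + a * r)) =
        (Real.log (1 + a * r) - (a * r - (a * r) ^ 2 / 2)) / (a ^ 2 * r) +
          r * (1 - a * r) / (2 * (1 + a * r)) := by
      field_simp
      ring
    rw [hid]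
    have : 0 ≤ (Real.log (1 + a * r) - (a * r - (a * r) ^ 2 / 2)) / (a ^ 2 * r) := by
      apply div_nonneg (by linarith) (by positivity)
    linarith
  have h3 : r * (1 - r) / (2 * (1 + r)) ≤ r * (1 - a * r) / (2 * (1 + a * r)) := by
    have := hanti (mem_Icc.mpr ⟨ha0.le, ha1⟩) (mem_Icc.mpr ⟨zero_le_one, le_refl 1⟩) ha1
    simpa using this
  exact ⟨hanti, hmain, h3, le_trans h3 hmain⟩
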